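/- Let (m_j), (n_j) be the ℓ_1-parameters (m_1 = 2, n_1 = 1, m_{j+1} = m_j^{m_j}, n_{j+1} = 2^{2m_{j+1}} n_j) and let W_aux^{(1)} be the ℓ_1-auxiliary norming set. Let j ≥ 2, 0 < ε ≤ 1/m_j, and let x = Σ_{k∈F} c_k e_k be an (n_j, ε)-basic special convex combination. Then every f ∈ W_aux^{(1)} satisfies: (a) if f = ±e_i^* for some i, then |f(x)| ≤ ε; (b) if f = (1/m_i)·Σ_{l=1}^d f_l, for an S_{n_i+1}-admissible sequence (f_l) in W_aux^{(1)}, with m_i ≥ m_j, then |f(x)| ≤ 1/m_i; (c) if f = (1/m_i)·Σ_{l=1}^d f_l as above with m_i < m_j, then |f(x)| ≤ 2/(m_i · m_j). -/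

import Mathlib

/-- `E < F` for finite sets of naturals: every element of `E` is less than
every element of `F` (vacuously true if one of them is empty). -/
def FinsetLT (E F : Finset ℕ) : Prop := ∀ a ∈ E, ∀ b ∈ F, a < b

/-- The convolution `M * N` of two families of finite subsets of `ℕ`: it consists of `∅`
together with all unions `E₁ ∪ … ∪ E_k` where `E₁ < … < E_k` are nonempty sets in `N`
and `{min E₁, …, min E_k} ∈ M`. -/
def SchreierConv (M N : Set (Finset ℕ)) : Set (Finset ℕ) :=
  {E | E = ∅ ∨ ∃ (k : ℕ) (Es : Fin k → Finset ℕ),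
    (∀ i, Es i ∈ N) ∧ (∀ i, (Es i).Nonempty) ∧
    (∀ i j : Fin k, i < j → FinsetLT (Es i) (Es j)) ∧
    (Finset.image (fun i => sInf (↑(Es i) : Set ℕ)) Finset.univ) ∈ M ∧
    E = Finset.univ.biUnion Es}

/-- The first Schreier family `S₁ = {E : #E ≤ min E} ∪ {∅}`. -/
def SchreierOne : Set (Finset ℕ) := {E | ∀ k ∈ E, E.card ≤ k}

/-- The Schreier families: `S₀` = singletons and `∅`, `S₁` as above,
`S_{n+1} = S₁ * S_n`. -/
def Schreier : ℕ → Set (Finset ℕ)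
  | 0 => {E | E.card ≤ 1}
  | 1 => SchreierOne
  | n + 2 => SchreierConv SchreierOne (Schreier (n + 1))

/-- The minimum of the support of an element of `c₀₀(ℕ) = ℕ →₀ ℝ`. -/
noncomputable def minsupp (f : ℕ →₀ ℝ) : ℕ := sInf (↑f.support : Set ℕ)

/-- The maximum of the support of an element of `c₀₀(ℕ)`. -/
noncomputable def maxsupp (f : ℕ →₀ ℝ) : ℕ := f.support.sup id

/-- The action of a functional `f ∈ c₀₀(ℕ)` on a vector `x ∈ c₀₀(ℕ)`:
`f(x) = ∑ₖ f(k)·x(k)`. -/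
noncomputable def ev (f x : ℕ →₀ ℝ) : ℝ := ∑ k ∈ f.support, f k * x k

/-- The seminorm induced on `c₀₀(ℕ)` by a set `W` of functionals:
`‖x‖_W = sup {f(x) : f ∈ W}`. -/
noncomputable def WNorm (W : Set (ℕ →₀ ℝ)) (x : ℕ →₀ ℝ) : ℝ :=
  sSup ((fun f => ev f x) '' W)

/-- A finite sequence of functionals in `c₀₀(ℕ)` is `S_n`-admissible if the supports are
nonempty and successive and the set of minima of the supports belongs to `S_n`. -/
def IsAdmissible (n : ℕ) {d : ℕ} (f : Fin d → (ℕ →₀ ℝ)) : Prop :=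
  (∀ l, f l ≠ 0) ∧
  (∀ l l' : Fin d, l < l' → ∀ a ∈ (f l).support, ∀ b ∈ (f l').support, a < b) ∧
  (Finset.image (fun l => minsupp (f l)) Finset.univ) ∈ Schreier n

/-- The sequence `m₁ = b`, `m_{j+1} = m_j ^ (m_j)` (0-indexed in Lean: `mpar b 0 = m₁`). -/
def mpar (b : ℕ) : ℕ → ℕ
  | 0 => b
  | j + 1 => mpar b j ^ mpar b j

/-- The sequence `n₁ = 1`, `n_{j+1} = 2 ^ (2 m_{j+1}) · n_j` (0-indexed in Lean). -/
def npar (b : ℕ) : ℕ → ℕ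
  | 0 => 1
  | j + 1 => 2 ^ (2 * mpar b (j + 1)) * npar b j

/-- The coefficients `(c_k)_{k ∈ F}` of an `(n, ε)`-basic special convex combination
`∑_{k ∈ F} c_k e_k`: a convex combination with `F ∈ S_n` and `∑_{k ∈ G} c_k < ε` for every
`G ⊆ F` with `G ∈ S_{n-1}`. -/
def IsBSCC (n : ℕ) (ε : ℝ) (F : Finset ℕ) (c : ℕ → ℝ) : Prop :=
  (∀ k ∈ F, 0 ≤ c k) ∧ (∑ k ∈ F, c k) = 1 ∧ F ∈ Schreier n ∧
  ∀ G ⊆ F, G ∈ Schreier (n - 1) → ∑ k ∈ G, c k < ε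

/-- The vector `∑_{k ∈ F} c_k e_k ∈ c₀₀(ℕ)`. -/
noncomputable def bvec (F : Finset ℕ) (c : ℕ → ℝ) : ℕ →₀ ℝ :=
  ∑ k ∈ F, c k • (Finsupp.single k 1 : ℕ →₀ ℝ)

/-- The `ℓ₁`-auxiliary norming set `W_aux^{(1)}`: the minimal subset of `c₀₀(ℕ)` containing
`±e_i^*` and closed under the operations `(S_{n_j + 1}, m_j)` (over the `ℓ₁`-parameters
`m_j = mpar 2 j`, `n_j = npar 2 j`). -/
inductive WAux1 : (ℕ →₀ ℝ) → Prop
  | pos (i : ℕ) : WAux1 (Finsupp.single i 1)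
  | neg (i : ℕ) : WAux1 (-(Finsupp.single i 1))
  | op (j d : ℕ) (g : Fin d → ℕ →₀ ℝ) (hg : ∀ l, WAux1 (g l))
      (hadm : IsAdmissible (npar 2 j + 1) g) :
      WAux1 ((mpar 2 j : ℝ)⁻¹ • ∑ l, g l)

/-!
Part (a) is the smallness of `x` on sets of `S_{n_j - 1}`, and (b) holds because the successive
supports make every coefficient of `f` at most `1/m_i` in modulus while `x` is a convex
combination. For (c) one shows, by induction on the construction of `f ∈ W_aux^{(1)}`, that
whenever `w 2^t ≥ 1` and `w m_j ≥ 1`, `|f(x)|` is at most the mass of `x` on a set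
`G ⊆ supp f` in `S_{t (n_{j-1} + 1)}` plus `w` times the mass of `x` on `supp f`: an operation
with `w m_i ≥ 1` is absorbed by the second term, and otherwise `m_i < m_j`, so the sets of the
pieces, glued along an `S_{n_i + 1}`-admissible sequence, lie in
`S_{n_{j-1} + 1} * S_{(t-1)(n_{j-1} + 1)} ⊆ S_{t (n_{j-1} + 1)}`. With `w = 1/m_j` and
`t = 2 m_j` this set lies in `S_{n_j - 1}`, so its mass is `< ε ≤ 1/m_j`.
In Lean indexing `m_j = mpar 2 (k + 1)` and `n_{j-1} = npar 2 k`.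
-/

open Finset

lemma image_filter_mem_of_subset_image {α β : Type*} [DecidableEq β] {s : Finset α} {f : α → β}
    {t : Finset β} (ht : t ⊆ s.image f) : (s.filter fun i => f i ∈ t).image f = t := by
  ext b
  simp only [mem_image, mem_filter]
  refine ⟨fun ⟨i, ⟨_, hi⟩, hib⟩ => hib ▸ hi, fun hb => ?_⟩
  obtain ⟨i, hi, rfl⟩ := mem_image.1 (ht hb)
  exact ⟨i, ⟨hi, hb⟩, rfl⟩

section Schreier

lemma sInf_coe_mem {E : Finset ℕ} (h : E.Nonempty) : sInf (E : Set ℕ) ∈ E :=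
  Nat.sInf_mem (by exact_mod_cast h)

lemma sInf_coe_le {E : Finset ℕ} {k : ℕ} (h : k ∈ E) : sInf (E : Set ℕ) ≤ k :=
  Nat.sInf_le (by exact_mod_cast h)

lemma empty_mem_schreier : ∀ n, (∅ : Finset ℕ) ∈ Schreier n
  | 0 => by simp [Schreier]
  | 1 => by simp [Schreier, SchreierOne]
  | _ + 2 => Or.inl rfl

lemma one_le_of_mem_schreier_succ : ∀ {n : ℕ} {E : Finset ℕ}, E ∈ Schreier (n + 1) →
    ∀ {k}, k ∈ E → 1 ≤ k
  | 0, E, hE, k, hk => (card_pos.2 ⟨k, hk⟩).trans_le (hE k hk)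
  | _ + 1, _, Or.inl rfl, _, hk => absurd hk (notMem_empty _)
  | _ + 1, _, Or.inr ⟨_, Es, hEs, _, _, _, rfl⟩, _, hk => by
    obtain ⟨i, -, hki⟩ := mem_biUnion.1 hk
    exact one_le_of_mem_schreier_succ (hEs i) hki

variable {ι : Type*} [LinearOrder ι]

lemma biUnion_mem_schreier_add_two (n : ℕ) (s : Finset ι) {E : ι → Finset ℕ}
    (hE : ∀ i, E i ∈ Schreier (n + 1)) (hsucc : ∀ i j, i < j → FinsetLT (E i) (E j))
    (hcard : ∀ i ∈ s, ∀ k ∈ E i, #s ≤ k) :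
    s.biUnion E ∈ Schreier (n + 2) := by
  classical
  set t := s.filter fun i => (E i).Nonempty
  set σ := t.orderEmbOfFin rfl
  have hσ : ∀ a, σ a ∈ s ∧ (E (σ a)).Nonempty := fun a => mem_filter.1 (t.orderEmbOfFin_mem rfl a)
  refine Or.inr ⟨#t, fun a => E (σ a), fun a => hE _, fun a => (hσ a).2,
    fun a b hab => hsucc _ _ (σ.strictMono hab), fun k hk => ?_, ?_⟩
  · obtain ⟨a, -, rfl⟩ := mem_image.1 hk
    calc #(univ.image fun a => sInf (E (σ a) : Set ℕ)) ≤ #t := by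
          simpa using card_image_le (s := (univ : Finset (Fin #t)))
      _ ≤ #s := card_filter_le _ _
      _ ≤ _ := hcard _ (hσ a).1 _ (sInf_coe_mem (hσ a).2)
  · ext k
    simp only [mem_biUnion, mem_univ, true_and]
    refine ⟨fun ⟨i, hi, hki⟩ => ?_, fun ⟨a, hka⟩ => ⟨_, (hσ a).1, hka⟩⟩
    have : i ∈ Set.range σ := by
      rw [t.range_orderEmbOfFin rfl]; exact mem_filter.2 ⟨hi, k, hki⟩
    obtain ⟨a, rfl⟩ := this
    exact ⟨a, hki⟩

section Glue

variable {B G : ι → Finset ℕ} {Q : ℕ}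

lemma strictMono_sInf_coe (hB : ∀ i, (B i).Nonempty)
    (hsucc : ∀ i j, i < j → FinsetLT (B i) (B j)) :
    StrictMono fun i => sInf (B i : Set ℕ) :=
  fun i j hij => hsucc i j hij _ (sInf_coe_mem (hB i)) _ (sInf_coe_mem (hB j))

lemma biUnion_mem_schreier_of_image_mem_zero (hmono : StrictMono fun i => sInf (B i : Set ℕ))
    (hG : ∀ i, G i ∈ Schreier Q) {s : Finset ι}
    (hs : s.image (fun i => sInf (B i : Set ℕ)) ∈ Schreier 0) :
    s.biUnion G ∈ Schreier Q := by
  have hcard : #s ≤ 1 := by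
    rwa [← card_image_of_injective s hmono.injective]
  rcases s.eq_empty_or_nonempty with rfl | ⟨i, hi⟩
  · simpa using empty_mem_schreier Q
  · rw [eq_singleton_iff_unique_mem.2 ⟨hi, fun j hj => card_le_one.1 hcard j hj i hi⟩,
      singleton_biUnion]
    exact hG i

lemma biUnion_mem_schreier_of_image_mem_one (hB : ∀ i, (B i).Nonempty)
    (hsucc : ∀ i j, i < j → FinsetLT (B i) (B j)) (hGB : ∀ i, G i ⊆ B i)
    (hG : ∀ i, G i ∈ Schreier Q) {s : Finset ι}
    (hs : s.image (fun i => sInf (B i : Set ℕ)) ∈ Schreier 1) :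
    s.biUnion G ∈ Schreier (1 + Q) := by
  classical
  have hcard : ∀ i ∈ s, ∀ k ∈ G i, #s ≤ k := fun i hi k hk => calc
    #s = #(s.image fun i => sInf (B i : Set ℕ)) :=
      (card_image_of_injective s (strictMono_sInf_coe hB hsucc).injective).symm
    _ ≤ sInf (B i : Set ℕ) := hs _ (mem_image_of_mem _ hi)
    _ ≤ k := sInf_coe_le (hGB i hk)
  cases Q with
  | zero =>
    intro k hk
    obtain ⟨i, hi, hki⟩ := mem_biUnion.1 hk
    calc #(s.biUnion G) ≤ ∑ i ∈ s, #(G i) := card_biUnion_le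
      _ ≤ ∑ _i ∈ s, 1 := sum_le_sum fun i _ => hG i
      _ = #s := by simp
      _ ≤ k := hcard i hi k hki
  | succ q =>
    rw [show 1 + (q + 1) = q + 2 by omega]
    exact biUnion_mem_schreier_add_two q s hG
      (fun i j hij a ha b hb => hsucc i j hij a (hGB i ha) b (hGB j hb)) hcard

lemma biUnion_mem_schreier_of_image_mem_add_two (hB : ∀ i, (B i).Nonempty)
    (hsucc : ∀ i j, i < j → FinsetLT (B i) (B j)) (hGB : ∀ i, G i ⊆ B i) {n : ℕ}
    (ih : ∀ s : Finset ι, s.image (fun i => sInf (B i : Set ℕ)) ∈ Schreier (n + 1) →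
      s.biUnion G ∈ Schreier (n + 1 + Q))
    {s : Finset ι} (hs : s.image (fun i => sInf (B i : Set ℕ)) ∈ Schreier (n + 2)) :
    s.biUnion G ∈ Schreier (n + 2 + Q) := by
  classical
  have hmono := strictMono_sInf_coe hB hsucc
  rcases hs with hs | ⟨r, D, hD, hDne, hDsucc, hDmin, hDU⟩
  · rw [image_eq_empty.1 hs, biUnion_empty]
    exact empty_mem_schreier _
  -- group the blocks according to the piece `D m` containing their minimum
  set part : Fin r → Finset ι := fun m => s.filter fun i => sInf (B i : Set ℕ) ∈ D m
  have hcover : s.biUnion G = univ.biUnion fun m => (part m).biUnion G := by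
    ext k
    simp only [mem_biUnion, mem_univ, true_and, part, mem_filter]
    refine ⟨fun ⟨i, hi, hki⟩ => ?_, fun ⟨m, i, ⟨hi, _⟩, hki⟩ => ⟨i, hi, hki⟩⟩
    obtain ⟨m, -, hm⟩ := mem_biUnion.1 (hDU ▸ mem_image_of_mem _ hi :)
    exact ⟨m, i, ⟨hi, hm⟩, hki⟩
  have hmem : ∀ {m k}, k ∈ (part m).biUnion G →
      ∃ i ∈ s, sInf (B i : Set ℕ) ∈ D m ∧ k ∈ G i := by
    intro m k hk
    obtain ⟨i, hi, hki⟩ := mem_biUnion.1 hk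
    exact ⟨i, (mem_filter.1 hi).1, (mem_filter.1 hi).2, hki⟩
  rw [hcover, show n + 2 + Q = n + Q + 2 by omega]
  refine biUnion_mem_schreier_add_two (n + Q) univ (fun m => ?_) (fun m m' hmm' => ?_) ?_
  · rw [show n + Q + 1 = n + 1 + Q by omega]
    exact ih _ <|
      image_filter_mem_of_subset_image (hDU ▸ subset_biUnion_of_mem D (mem_univ m)) ▸ hD m
  · intro a ha b hb
    obtain ⟨i, -, hi, hai⟩ := hmem ha
    obtain ⟨j, -, hj, hbj⟩ := hmem hb
    have hij : i < j := hmono.lt_iff_lt.1 (hDsucc m m' hmm' _ hi _ hj)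
    exact hsucc i j hij a (hGB i hai) b (hGB j hbj)
  · intro m _ k hk
    obtain ⟨i, -, hi, hki⟩ := hmem hk
    calc #(univ : Finset (Fin r)) = #(univ.image fun m => sInf (D m : Set ℕ)) :=
          (card_image_of_injective _ (strictMono_sInf_coe hDne hDsucc).injective).symm
      _ ≤ sInf (D m : Set ℕ) := hDmin _ (mem_image_of_mem _ (mem_univ m))
      _ ≤ sInf (B i : Set ℕ) := sInf_coe_le hi
      _ ≤ k := sInf_coe_le (hGB i hki)

/-- `S_N * S_Q ⊆ S_{N+Q}`, combined with the spreading property of `S_N`: the pieces `G i` only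
have to lie inside successive blocks `B i` whose minima form a set in `S_N`. -/
theorem biUnion_mem_schreier_add (hB : ∀ i, (B i).Nonempty)
    (hsucc : ∀ i j, i < j → FinsetLT (B i) (B j)) (hGB : ∀ i, G i ⊆ B i)
    (hG : ∀ i, G i ∈ Schreier Q) :
    ∀ (N : ℕ) (s : Finset ι), s.image (fun i => sInf (B i : Set ℕ)) ∈ Schreier N →
      s.biUnion G ∈ Schreier (N + Q)
  | 0, _, hs => by
    rw [zero_add]
    exact biUnion_mem_schreier_of_image_mem_zero (strictMono_sInf_coe hB hsucc) hG hs
  | 1, _, hs => biUnion_mem_schreier_of_image_mem_one hB hsucc hGB hG hs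
  | n + 2, _, hs => biUnion_mem_schreier_of_image_mem_add_two hB hsucc hGB
      (biUnion_mem_schreier_add hB hsucc hGB hG (n + 1)) hs

end Glue

lemma mem_schreier_succ {n : ℕ} {E : Finset ℕ} (hE : E ∈ Schreier n) (hpos : ∀ k ∈ E, 1 ≤ k) :
    E ∈ Schreier (n + 1) := by
  rcases E.eq_empty_or_nonempty with rfl | hne
  · exact empty_mem_schreier _
  have hmin : (univ : Finset Unit).image (fun _ => sInf (E : Set ℕ)) ∈ Schreier 1 := by
    simpa [Schreier, SchreierOne] using hpos _ (sInf_coe_mem hne)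
  simpa [add_comm] using biUnion_mem_schreier_add (B := fun _ : Unit => E) (fun _ => hne)
    (fun i j hij => absurd hij (Subsingleton.elim i j ▸ lt_irrefl i)) (fun _ => subset_rfl)
    (fun _ => hE) 1 univ hmin

lemma mem_schreier_of_le {p q : ℕ} (hpq : p ≤ q) {E : Finset ℕ} (hpos : ∀ k ∈ E, 1 ≤ k)
    (hE : E ∈ Schreier p) : E ∈ Schreier q := by
  induction q, hpq using Nat.le_induction with
  | base => exact hE
  | succ q _ ih => exact mem_schreier_succ ih hpos

lemma inter_mem_schreier_of_subset_singleton {S F : Finset ℕ} {i : ℕ} (hS : S ⊆ {i})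
    (hF : ∀ k ∈ F, 1 ≤ k) (n : ℕ) : S ∩ F ∈ Schreier n :=
  mem_schreier_of_le n.zero_le (fun k hk => hF k (mem_inter.1 hk).2)
    (card_le_one_iff_subset_singleton.2 ⟨i, inter_subset_left.trans hS⟩)

end Schreier

section Admissible

variable {n d : ℕ} {g : Fin d → ℕ →₀ ℝ}

lemma IsAdmissible.pairwise_disjoint_support (hadm : IsAdmissible n g) :
    Pairwise fun l l' => Disjoint (g l).support (g l').support := by
  intro l l' hne
  refine disjoint_left.2 fun a hal hal' => ?_
  rcases hne.lt_or_gt with h | h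
  · exact lt_irrefl a (hadm.2.1 l l' h a hal a hal')
  · exact lt_irrefl a (hadm.2.1 l' l h a hal' a hal)

lemma IsAdmissible.biUnion_mem_schreier {N Q : ℕ} (hadm : IsAdmissible (n + 1) g) (hnN : n ≤ N)
    {G : Fin d → Finset ℕ} (hGg : ∀ l, G l ⊆ (g l).support) (hG : ∀ l, G l ∈ Schreier Q) :
    univ.biUnion G ∈ Schreier (N + 1 + Q) :=
  biUnion_mem_schreier_add (fun l => Finsupp.support_nonempty_iff.2 (hadm.1 l)) hadm.2.1 hGg hG
    (N + 1) univ (mem_schreier_of_le (by omega)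
      (fun _ hk => one_le_of_mem_schreier_succ hadm.2.2 hk) hadm.2.2)

end Admissible

section Parameters

variable {b : ℕ}

lemma two_le_mpar (hb : 2 ≤ b) : ∀ j, 2 ≤ mpar b j
  | 0 => hb
  | j + 1 => (two_le_mpar hb j).trans
      (Nat.le_self_pow (by have := two_le_mpar hb j; omega) _)

lemma mpar_pos (hb : 2 ≤ b) (j : ℕ) : 0 < mpar b j :=
  two_pos.trans_le (two_le_mpar hb j)

lemma mpar_strictMono (hb : 2 ≤ b) : StrictMono (mpar b) :=
  strictMono_nat_of_lt_succ fun j => Nat.lt_pow_self (two_le_mpar hb j)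

lemma npar_mono : Monotone (npar b) :=
  monotone_nat_of_le_succ fun _ => Nat.le_mul_of_pos_left _ (Nat.two_pow_pos _)

lemma one_le_npar : ∀ j, 1 ≤ npar b j
  | 0 => le_rfl
  | j + 1 => Nat.mul_pos (Nat.two_pow_pos _) (one_le_npar j)

lemma four_mul_add_two_lt_four_pow {m : ℕ} (hm : 2 ≤ m) : 4 * m + 2 < 4 ^ m := by
  induction m, hm using Nat.le_induction with
  | base => norm_num
  | succ m _ ih => rw [pow_succ]; omega

lemma mul_lt_npar_succ (hb : 2 ≤ b) (k : ℕ) :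
    (2 * mpar b (k + 1) + 1) * (npar b k + 1) < npar b (k + 1) := by
  have hm := four_mul_add_two_lt_four_pow (two_le_mpar hb (k + 1))
  have hn := one_le_npar (b := b) k
  rw [npar, pow_mul]
  norm_num
  nlinarith

end Parameters

section Evaluation

variable {F : Finset ℕ} {c : ℕ → ℝ}

lemma ev_bvec (f : ℕ →₀ ℝ) : ev f (bvec F c) = ∑ k ∈ F, f k * c k := by
  classical
  have hx : ∀ k, bvec F c k = if k ∈ F then c k else 0 := fun k => by
    simp [bvec, Finsupp.finsetSum_apply, Finsupp.single_apply]
  rw [ev, sum_subset (subset_union_left (s₂ := F)) fun k _ hk => by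
      rw [Finsupp.notMem_support_iff.1 hk, zero_mul],
    ← sum_subset (subset_union_right (s₁ := f.support)) fun k _ hk => by
      rw [hx, if_neg hk, mul_zero]]
  exact sum_congr rfl fun k hk => by rw [hx, if_pos hk]

lemma ev_smul_sum_bvec {ι : Type*} (s : Finset ι) (a : ℝ) (g : ι → ℕ →₀ ℝ) :
    ev (a • ∑ l ∈ s, g l) (bvec F c) = a * ∑ l ∈ s, ev (g l) (bvec F c) := by
  simp only [ev_bvec, Finsupp.smul_apply, Finsupp.finsetSum_apply, smul_eq_mul, mul_assoc,
    ← mul_sum, sum_mul]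
  rw [sum_comm]

lemma abs_ev_bvec_le (hc : ∀ k ∈ F, 0 ≤ c k) {f : ℕ →₀ ℝ} (hf : ∀ k, |f k| ≤ 1) :
    |ev f (bvec F c)| ≤ ∑ k ∈ f.support ∩ F, c k := by
  rw [ev_bvec, ← sum_subset inter_subset_right fun k hkF hk => by
    rw [Finsupp.notMem_support_iff.1 fun h => hk (mem_inter.2 ⟨h, hkF⟩), zero_mul]]
  refine (abs_sum_le_sum_abs _ _).trans (sum_le_sum fun k hk => ?_)
  have hck := hc k (mem_inter.1 hk).2
  rw [abs_mul, abs_of_nonneg hck]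
  exact mul_le_of_le_one_left hck (hf k)

variable {ι : Type*} [Fintype ι] {g : ι → ℕ →₀ ℝ}

lemma support_smul_sum_eq_biUnion
    (hdisj : Pairwise fun l l' => Disjoint (g l).support (g l').support) {a : ℝ} (ha : a ≠ 0) :
    (a • ∑ l, g l).support = univ.biUnion fun l => (g l).support := by
  classical
  rw [Finsupp.support_smul_eq ha, Finsupp.support_sum_eq_biUnion _ fun _ _ h => hdisj h]

lemma abs_smul_sum_apply_le
    (hdisj : Pairwise fun l l' => Disjoint (g l).support (g l').support)
    (hg : ∀ l k, |g l k| ≤ 1) {a : ℝ} (ha : 0 ≤ a) (k : ℕ) : |(a • ∑ l, g l) k| ≤ a := by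
  rw [Finsupp.smul_apply, Finsupp.finsetSum_apply, smul_eq_mul, abs_mul, abs_of_nonneg ha]
  refine mul_le_of_le_one_right ha ?_
  by_cases hk : ∃ l, k ∈ (g l).support
  · obtain ⟨l, hl⟩ := hk
    rw [sum_eq_single l (fun l' _ hl' => Finsupp.notMem_support_iff.1
      fun h => disjoint_left.1 (hdisj hl') h hl) (by simp)]
    exact hg l k
  · simp [Finsupp.notMem_support_iff.1 (not_exists.1 hk _)]

lemma WAux1.abs_apply_le_one {f : ℕ →₀ ℝ} (hf : WAux1 f) (k : ℕ) : |f k| ≤ 1 := by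
  induction hf generalizing k with
  | pos i => rw [Finsupp.single_apply]; split_ifs <;> simp
  | neg i => rw [Finsupp.neg_apply, abs_neg, Finsupp.single_apply]; split_ifs <;> simp
  | op j d g hg hadm ih =>
    refine (abs_smul_sum_apply_le hadm.pairwise_disjoint_support ih (by positivity) k).trans ?_
    exact inv_le_one_of_one_le₀ (by exact_mod_cast (two_le_mpar le_rfl j).trans' one_le_two)

lemma abs_ev_smul_sum_bvec_le
    (hdisj : Pairwise fun l l' => Disjoint (g l).support (g l').support) {m : ℝ} (hm : 0 < m)
    {G : ι → Finset ℕ} (hGg : ∀ l, G l ⊆ (g l).support) {w : ℝ}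
    (hg : ∀ l, |ev (g l) (bvec F c)| ≤ ∑ k ∈ G l, c k + w * ∑ k ∈ (g l).support ∩ F, c k) :
    |ev (m⁻¹ • ∑ l, g l) (bvec F c)| ≤
      m⁻¹ * (∑ k ∈ univ.biUnion G, c k + w * ∑ k ∈ (m⁻¹ • ∑ l, g l).support ∩ F, c k) := by
  classical
  have hGdisj : (↑(univ : Finset ι) : Set ι).PairwiseDisjoint G := fun l _ l' _ h =>
    (hdisj h).mono (hGg l) (hGg l')
  have hFdisj : (↑(univ : Finset ι) : Set ι).PairwiseDisjoint fun l => (g l).support ∩ F :=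
    fun l _ l' _ h => (hdisj h).mono inter_subset_left inter_subset_left
  rw [ev_smul_sum_bvec, abs_mul, abs_of_pos (inv_pos.2 hm),
    support_smul_sum_eq_biUnion hdisj (inv_ne_zero hm.ne'), biUnion_inter,
    sum_biUnion hGdisj, sum_biUnion hFdisj, mul_sum, ← sum_add_distrib]
  exact mul_le_mul_of_nonneg_left ((abs_sum_le_sum_abs _ _).trans (sum_le_sum fun l _ => hg l))
    (inv_nonneg.2 hm.le)

lemma abs_ev_smul_sum_bvec_le_mass (hc : ∀ k ∈ F, 0 ≤ c k)
    (hdisj : Pairwise fun l l' => Disjoint (g l).support (g l').support)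
    (hg : ∀ l k, |g l k| ≤ 1) {m : ℝ} (hm : 0 < m) :
    |ev (m⁻¹ • ∑ l, g l) (bvec F c)| ≤ m⁻¹ * ∑ k ∈ (m⁻¹ • ∑ l, g l).support ∩ F, c k := by
  have h := abs_ev_smul_sum_bvec_le hdisj hm (G := fun _ => ∅) (w := 1)
    (fun _ => empty_subset _) fun l => by simpa using abs_ev_bvec_le hc (hg l)
  rwa [subset_empty.1 (biUnion_subset.2 fun _ _ => subset_rfl), sum_empty, zero_add, one_mul] at h

end Evaluation

section Estimate

variable {F : Finset ℕ} {c : ℕ → ℝ}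

def SplitBound (F : Finset ℕ) (c : ℕ → ℝ) (Q : ℕ) (w : ℝ) (f : ℕ →₀ ℝ) : Prop :=
  ∃ G ⊆ f.support ∩ F, G ∈ Schreier Q ∧
    |ev f (bvec F c)| ≤ ∑ k ∈ G, c k + w * ∑ k ∈ f.support ∩ F, c k

lemma IsAdmissible.exists_abs_ev_smul_sum_bvec_le {n N d : ℕ} {g : Fin d → ℕ →₀ ℝ}
    (hadm : IsAdmissible (n + 1) g) (hnN : n ≤ N) {m : ℝ} (hm : 0 < m) {Q : ℕ} {w : ℝ}
    (hg : ∀ l, SplitBound F c Q w (g l)) :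
    ∃ G ⊆ (m⁻¹ • ∑ l, g l).support ∩ F, G ∈ Schreier (N + 1 + Q) ∧
      |ev (m⁻¹ • ∑ l, g l) (bvec F c)| ≤
        m⁻¹ * (∑ k ∈ G, c k + w * ∑ k ∈ (m⁻¹ • ∑ l, g l).support ∩ F, c k) := by
  choose G hGg hG hbound using hg
  have hdisj := hadm.pairwise_disjoint_support
  refine ⟨univ.biUnion G, ?_, hadm.biUnion_mem_schreier hnN
    (fun l => (hGg l).trans inter_subset_left) hG,
    abs_ev_smul_sum_bvec_le hdisj hm (fun l => (hGg l).trans inter_subset_left) hbound⟩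
  rw [support_smul_sum_eq_biUnion hdisj (inv_ne_zero hm.ne'), biUnion_inter]
  exact biUnion_mono fun l _ => hGg l

lemma splitBound_of_support_subset_singleton (hc : ∀ a ∈ F, 0 ≤ c a) (hF : ∀ a ∈ F, 1 ≤ a)
    {f : ℕ →₀ ℝ} (hf : ∀ a, |f a| ≤ 1) {i : ℕ} (hi : f.support ⊆ {i}) (Q : ℕ) {w : ℝ}
    (hw : 0 ≤ w) : SplitBound F c Q w f :=
  ⟨_, subset_rfl, inter_mem_schreier_of_subset_singleton hi hF Q,
    (abs_ev_bvec_le hc hf).trans (le_add_of_nonneg_right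
      (mul_nonneg hw (sum_nonneg fun a ha => hc a (mem_inter.1 ha).2)))⟩

theorem WAux1.splitBound (hc : ∀ a ∈ F, 0 ≤ c a) (hF : ∀ a ∈ F, 1 ≤ a) (k : ℕ)
    {f : ℕ →₀ ℝ} (hf : WAux1 f) (t : ℕ) {w : ℝ} (ht : 1 ≤ w * 2 ^ t)
    (hw : 1 ≤ w * mpar 2 (k + 1)) : SplitBound F c (t * (npar 2 k + 1)) w f := by
  have hw0 : ∀ {t : ℕ} {w : ℝ}, 1 ≤ w * 2 ^ t → 0 < w :=
    fun ht => pos_of_mul_pos_left (one_pos.trans_le ht) (by positivity)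
  induction hf generalizing t w with
  | pos i =>
    exact splitBound_of_support_subset_singleton hc hF (WAux1.pos i).abs_apply_le_one
      Finsupp.support_single_subset _ (hw0 ht).le
  | neg i =>
    exact splitBound_of_support_subset_singleton hc hF (WAux1.neg i).abs_apply_le_one
      (by rw [Finsupp.support_neg]; exact Finsupp.support_single_subset) _ (hw0 ht).le
  | op i d g hg hadm ih =>
    have hm2 : (2 : ℝ) ≤ mpar 2 i := by exact_mod_cast two_le_mpar le_rfl i
    have hm : (0 : ℝ) < mpar 2 i := by exact_mod_cast mpar_pos le_rfl i
    have hmass : 0 ≤ ∑ a ∈ ((mpar 2 i : ℝ)⁻¹ • ∑ l, g l).support ∩ F, c a :=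
      sum_nonneg fun a ha => hc a (mem_inter.1 ha).2
    by_cases hwm : 1 ≤ w * mpar 2 i
    · refine ⟨∅, empty_subset _, empty_mem_schreier _, ?_⟩
      rw [sum_empty, zero_add]
      exact (abs_ev_smul_sum_bvec_le_mass hc hadm.pairwise_disjoint_support
        (fun l => (hg l).abs_apply_le_one) hm).trans
          (mul_le_mul_of_nonneg_right ((inv_le_iff_one_le_mul₀ hm).2 hwm) hmass)
    -- otherwise `mpar 2 i < mpar 2 (k + 1)`; the `g l` are controlled with weight `w * mpar 2 i`
    push Not at hwm
    have hik : i ≤ k := Nat.lt_succ_iff.1 <| (mpar_strictMono le_rfl).lt_iff_lt.1 <| by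
      exact_mod_cast lt_of_mul_lt_mul_left (hwm.trans_le hw) (hw0 ht).le
    obtain ⟨t, rfl⟩ : ∃ t', t = t' + 1 := Nat.exists_eq_add_one_of_ne_zero <| by
      rintro rfl; nlinarith
    have h2t : (0 : ℝ) < 2 ^ t := by positivity
    obtain ⟨G, hGsub, hG, hbound⟩ := hadm.exists_abs_ev_smul_sum_bvec_le (npar_mono hik) hm
      fun l => ih l t (w := w * mpar 2 i) (by rw [pow_succ] at ht; nlinarith)
        (by nlinarith [hw0 ht])
    refine ⟨G, hGsub, by rwa [add_one_mul, add_comm], hbound.trans ?_⟩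
    have hGnn : 0 ≤ ∑ a ∈ G, c a := sum_nonneg fun a ha => hc a (mem_inter.1 (hGsub ha)).2
    have hcancel : ∀ x : ℝ, (mpar 2 i : ℝ)⁻¹ * (w * mpar 2 i * x) = w * x := fun x => by
      field_simp
    rw [mul_add, hcancel]
    exact add_le_add_left (mul_le_of_le_one_left hGnn (inv_le_one_of_one_le₀ (by linarith))) _

end Estimate

namespace IsBSCC

variable {n : ℕ} {ε : ℝ} {F : Finset ℕ} {c : ℕ → ℝ}

lemma one_le_of_mem (h : IsBSCC n ε F c) (hn : 1 ≤ n) {a : ℕ} (ha : a ∈ F) : 1 ≤ a :=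
  one_le_of_mem_schreier_succ (n := n - 1) (by rw [Nat.sub_add_cancel hn]; exact h.2.2.1) ha

lemma sum_inter_le_one (h : IsBSCC n ε F c) (S : Finset ℕ) : ∑ a ∈ S ∩ F, c a ≤ 1 :=
  h.2.1 ▸ sum_le_sum_of_subset_of_nonneg inter_subset_right fun a ha _ => h.1 a ha

lemma abs_ev_lt_of_support_subset_singleton (h : IsBSCC n ε F c) (hn : 1 ≤ n)
    {f : ℕ →₀ ℝ} (hf : ∀ a, |f a| ≤ 1) {i : ℕ} (hi : f.support ⊆ {i}) :
    |ev f (bvec F c)| < ε :=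
  (abs_ev_bvec_le h.1 hf).trans_lt <| h.2.2.2 _ inter_subset_right <|
    inter_mem_schreier_of_subset_singleton hi (fun _ => h.one_le_of_mem hn) _

lemma abs_ev_smul_sum_le {d : ℕ} {g : Fin d → ℕ →₀ ℝ} (h : IsBSCC n ε F c)
    (hg : ∀ l a, |g l a| ≤ 1) (hdisj : Pairwise fun l l' => Disjoint (g l).support (g l').support)
    {m : ℝ} (hm : 0 < m) : |ev (m⁻¹ • ∑ l, g l) (bvec F c)| ≤ m⁻¹ :=
  calc _ ≤ m⁻¹ * ∑ a ∈ (m⁻¹ • ∑ l, g l).support ∩ F, c a :=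
        abs_ev_smul_sum_bvec_le_mass h.1 hdisj hg hm
    _ ≤ m⁻¹ * 1 := by gcongr; exact h.sum_inter_le_one _
    _ = m⁻¹ := mul_one _

lemma abs_ev_smul_sum_le_of_mpar_lt {k i d : ℕ} {g : Fin d → ℕ →₀ ℝ}
    (h : IsBSCC (npar 2 (k + 1)) ε F c) (hε : ε ≤ 1 / (mpar 2 (k + 1) : ℝ))
    (hg : ∀ l, WAux1 (g l)) (hadm : IsAdmissible (npar 2 i + 1) g)
    (hlt : mpar 2 i < mpar 2 (k + 1)) :
    |ev ((mpar 2 i : ℝ)⁻¹ • ∑ l, g l) (bvec F c)| ≤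
      2 / ((mpar 2 i : ℝ) * (mpar 2 (k + 1) : ℝ)) := by
  have hFpos : ∀ a ∈ F, 1 ≤ a := fun _ => h.one_le_of_mem (one_le_npar _)
  have hm : (0 : ℝ) < mpar 2 i := by exact_mod_cast mpar_pos le_rfl i
  have hmj : (0 : ℝ) < mpar 2 (k + 1) := by exact_mod_cast mpar_pos le_rfl (k + 1)
  have hik : i ≤ k := Nat.lt_succ_iff.1 ((mpar_strictMono le_rfl).lt_iff_lt.1 hlt)
  have h4m : (mpar 2 (k + 1) : ℝ) ≤ 2 ^ (2 * mpar 2 (k + 1)) := by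
    exact_mod_cast Nat.lt_two_pow_self.le.trans (Nat.pow_le_pow_right two_pos (by omega))
  have hidx : npar 2 k + 1 + 2 * mpar 2 (k + 1) * (npar 2 k + 1) ≤ npar 2 (k + 1) - 1 :=
    Nat.le_sub_one_of_lt (by linarith [mul_lt_npar_succ le_rfl k])
  obtain ⟨G, hGsub, hG, hbound⟩ := hadm.exists_abs_ev_smul_sum_bvec_le (npar_mono hik) hm
    fun l => (hg l).splitBound h.1 hFpos k (2 * mpar 2 (k + 1)) (w := 1 / mpar 2 (k + 1))
      (by rwa [one_div_mul_eq_div, one_le_div hmj]) (by rw [one_div_mul_cancel hmj.ne'])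
  have hGε : ∑ a ∈ G, c a < ε := h.2.2.2 G (hGsub.trans inter_subset_right) <|
    mem_schreier_of_le hidx (fun a ha => hFpos a (inter_subset_right (hGsub ha))) hG
  calc _ ≤ (mpar 2 i : ℝ)⁻¹ * (1 / mpar 2 (k + 1) + 1 / mpar 2 (k + 1) * 1) :=
        hbound.trans (by gcongr; exacts [hGε.le.trans hε, h.sum_inter_le_one _])
    _ = _ := by field_simp; ring

end IsBSCC

theorem stmt_16_general (j : ℕ) (hj : 1 ≤ j) (ε : ℝ)
    (hε' : ε ≤ 1 / (mpar 2 j : ℝ))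
    (F : Finset ℕ) (c : ℕ → ℝ) (hscc : IsBSCC (npar 2 j) ε F c) :
    (∀ i : ℕ, |ev (Finsupp.single i 1) (bvec F c)| ≤ ε ∧
      |ev (-(Finsupp.single i 1)) (bvec F c)| ≤ ε) ∧
    (∀ (i d : ℕ) (g : Fin d → ℕ →₀ ℝ), (∀ l, WAux1 (g l)) →
      IsAdmissible (npar 2 i + 1) g →
      ((mpar 2 j ≤ mpar 2 i →
        |ev ((mpar 2 i : ℝ)⁻¹ • ∑ l, g l) (bvec F c)| ≤ 1 / (mpar 2 i : ℝ)) ∧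
       (mpar 2 i < mpar 2 j →
        |ev ((mpar 2 i : ℝ)⁻¹ • ∑ l, g l) (bvec F c)| ≤
          2 / ((mpar 2 i : ℝ) * (mpar 2 j : ℝ))))) := by
  obtain ⟨k, rfl⟩ : ∃ k, j = k + 1 := ⟨j - 1, by omega⟩
  have hn : 1 ≤ npar 2 (k + 1) := one_le_npar _
  refine ⟨fun i => ⟨?_, ?_⟩, fun i d g hg hadm =>
    ⟨fun _ => ?_, hscc.abs_ev_smul_sum_le_of_mpar_lt hε' hg hadm⟩⟩
  · exact (hscc.abs_ev_lt_of_support_subset_singleton hn (WAux1.pos i).abs_apply_le_one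
      Finsupp.support_single_subset).le
  · exact (hscc.abs_ev_lt_of_support_subset_singleton hn (WAux1.neg i).abs_apply_le_one
      (by rw [Finsupp.support_neg]; exact Finsupp.support_single_subset)).le
  · rw [one_div]
    exact hscc.abs_ev_smul_sum_le (fun l => (hg l).abs_apply_le_one) hadm.pairwise_disjoint_support
      (by exact_mod_cast mpar_pos le_rfl i)

/-- let `j ≥ 2` (Lean index `j` with `1 ≤ j`), `0 < ε ≤ 1/m_j` and let
`x = ∑_{k ∈ F} c_k e_k` be an `(n_j, ε)`-basic special convex combination. Then every
`f ∈ W_aux^{(1)}` satisfies: (a) if `f = ±e_i^*`, `|f(x)| ≤ ε`; (b) if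
`f = (1/m_i)·∑ f_l` for an `S_{n_i + 1}`-admissible sequence in `W_aux^{(1)}` with
`m_i ≥ m_j`, then `|f(x)| ≤ 1/m_i`; (c) if `m_i < m_j`, then `|f(x)| ≤ 2/(m_i·m_j)`. -/
theorem stmt_16 (j : ℕ) (hj : 1 ≤ j) (ε : ℝ) (hε : 0 < ε)
    (hε' : ε ≤ 1 / (mpar 2 j : ℝ))
    (F : Finset ℕ) (c : ℕ → ℝ) (hscc : IsBSCC (npar 2 j) ε F c) :
    (∀ i : ℕ, |ev (Finsupp.single i 1) (bvec F c)| ≤ ε ∧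
      |ev (-(Finsupp.single i 1)) (bvec F c)| ≤ ε) ∧
    (∀ (i d : ℕ) (g : Fin d → ℕ →₀ ℝ), (∀ l, WAux1 (g l)) →
      IsAdmissible (npar 2 i + 1) g →
      ((mpar 2 j ≤ mpar 2 i →
        |ev ((mpar 2 i : ℝ)⁻¹ • ∑ l, g l) (bvec F c)| ≤ 1 / (mpar 2 i : ℝ)) ∧
       (mpar 2 i < mpar 2 j →
        |ev ((mpar 2 i : ℝ)⁻¹ • ∑ l, g l) (bvec F c)| ≤
          2 / ((mpar 2 i : ℝ) * (mpar 2 j : ℝ))))) :=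
  stmt_16_general j hj ε hε' F c hscc
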